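/- Let ν be a Borel probability on X satisfying, for all continuous f and all n, ∫ f dν = ∫ (Λ_n)^{-1} E_μ(Λ_n f | F_n) dν, where Λ_n = H^{-β[n]} λ^{[n]}. If H and p are Hölder continuous and positive, then ν = ν_β, the unique probability with ℒ_{-β log H}^*(ν_β) = λ_β ν_β. -/

import Mathlib

open MeasureTheory Finset

/-- The full shift space `{1,…,k}^ℕ`, modeled as `ℕ → Fin k`. -/
abbrev ShiftSpace (k : ℕ) := ℕ → Fin k

/-- The left shift `T`. -/
def shiftT {k : ℕ} (x : ShiftSpace k) : ShiftSpace k := fun n => x (n + 1)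

/-- Prepending a symbol: the `k` preimages of `x` under the shift are `consS i x`. -/
def consS {k : ℕ} (i : Fin k) (x : ShiftSpace k) : ShiftSpace k :=
  fun n => Nat.casesOn n i x

/-- The Ruelle operator `ℒ_p f (x) = ∑_{T z = x} p z · f z` on complex functions. -/
noncomputable def ruelleOp {k : ℕ} (p : ShiftSpace k → ℝ) (f : ShiftSpace k → ℂ) :
    ShiftSpace k → ℂ :=
  fun x => ∑ i : Fin k, (p (consS i x) : ℂ) * f (consS i x)

/-- The Ruelle operator on real functions. -/
noncomputable def ruelleOpR {k : ℕ} (p : ShiftSpace k → ℝ) (f : ShiftSpace k → ℝ) :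
    ShiftSpace k → ℝ :=
  fun x => ∑ i : Fin k, p (consS i x) * f (consS i x)

/-- Hölder continuity with respect to the standard ultrametric on the shift space:
`|f x - f y| ≤ C · 2^{-α n}` whenever `x` and `y` agree on the first `n` coordinates. -/
def HolderSeq {k : ℕ} (f : ShiftSpace k → ℝ) : Prop :=
  ∃ C α : ℝ, 0 < α ∧ ∀ x y : ShiftSpace k, ∀ n : ℕ,
    (∀ m < n, x m = y m) → |f x - f y| ≤ C * (2 : ℝ) ^ (-(α * n))

/-- `λ^{-[n]}(x) = ∏_{i<n} p(T^i x)`. -/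
noncomputable def lamInv {k : ℕ} (p : ShiftSpace k → ℝ) (n : ℕ) (x : ShiftSpace k) : ℝ :=
  ∏ i ∈ Finset.range n, p (shiftT^[i] x)

/-- `H^{β[n]}(x) = ∏_{i<n} H(T^i x)^β`. -/
noncomputable def hPow {k : ℕ} (H : ShiftSpace k → ℝ) (β : ℝ) (n : ℕ)
    (x : ShiftSpace k) : ℝ :=
  ∏ i ∈ Finset.range n, H (shiftT^[i] x) ^ β

/-- `Λ_n = H^{-β[n]} · λ^{[n]}`. -/
noncomputable def lambdaN {k : ℕ} (p H : ShiftSpace k → ℝ) (β : ℝ) (n : ℕ)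
    (x : ShiftSpace k) : ℝ :=
  hPow H (-β) n x * (lamInv p n x)⁻¹

/-- The Ruelle operator `ℒ_{-β log H}` on real functions. -/
noncomputable def ruelleH {k : ℕ} (H : ShiftSpace k → ℝ) (β : ℝ) (f : ShiftSpace k → ℝ) :
    ShiftSpace k → ℝ :=
  fun x => ∑ i : Fin k, H (consS i x) ^ (-β) * f (consS i x)

/-!
Since `ℒ_p (Λ_{n+1} f) = Λ_n · ℒ_{-β log H} f`, the condition on `ν` says
`∫ f dν = ∫ Λ_n⁻¹ · (ℒ_β^n f) ∘ Tⁿ dν` for every `n`. By the Ruelle–Perron–Frobenius theorem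
`ℒ_β^n f ≈ λ_βⁿ h_β ∫ f dν_β` uniformly, and the error is small *relative* to `λ_βⁿ h_β` because
`h_β` is bounded below. Comparing with the same identity for `f = h_β`, where `ℒ_β^n h_β = λ_βⁿ h_β`
exactly, gives `∫ f dν = ∫ f dν_β · ∫ h_β dν`; taking `f = 1` shows `∫ h_β dν = 1`.
-/

section RelativeApproximation

variable {X : Type*}

lemma exists_forall_abs_sub_le_mul_of_div {g : ℕ → X → ℝ} {r : ℕ → ℝ} {h : X → ℝ} {c : ℝ}
    [TopologicalSpace X] [CompactSpace X] (hr : ∀ n, 0 < r n) (hh : Continuous h)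
    (hh_pos : ∀ x, 0 < h x) (hg : ∀ ε > 0, ∃ N, ∀ n ≥ N, ∀ x, |g n x / r n - h x * c| ≤ ε) :
    ∀ ε > 0, ∃ n, ∀ x, |g n x - c * (r n * h x)| ≤ ε * (r n * h x) := by
  obtain ⟨m, hm, hm_le⟩ :=
    isCompact_univ.exists_forall_le' hh.continuousOn (a := 0) fun x _ => hh_pos x
  intro ε hε
  obtain ⟨N, hN⟩ := hg (ε * m) (by positivity)
  refine ⟨N, fun x => ?_⟩
  have hrN := hr N
  have hscale : g N x - c * (r N * h x) = r N * (g N x / r N - h x * c) := by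
    field_simp
  calc |g N x - c * (r N * h x)| = r N * |g N x / r N - h x * c| := by
        rw [hscale, abs_mul, abs_of_pos hrN]
    _ ≤ r N * (ε * m) := by gcongr; exact hN N le_rfl x
    _ ≤ ε * (r N * h x) := by
        have := hm_le x (Set.mem_univ x)
        nlinarith [mul_pos hrN hε]

lemma eq_mul_of_forall_abs_sub_le_mul [MeasurableSpace X] {ν : Measure X}
    {w u v : ℕ → X → ℝ} {F J c : ℝ} (hw : ∀ n x, 0 ≤ w n x)
    (hu : ∀ n, Integrable (fun x => w n x * u n x) ν)
    (hv : ∀ n, Integrable (fun x => w n x * v n x) ν)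
    (hF : ∀ n, ∫ x, w n x * u n x ∂ν = F) (hJ : ∀ n, ∫ x, w n x * v n x ∂ν = J)
    (huv : ∀ ε > 0, ∃ n, ∀ x, |u n x - c * v n x| ≤ ε * v n x) :
    F = c * J := by
  have key : ∀ ε > 0, |F - c * J| ≤ ε * J := by
    intro ε hε
    obtain ⟨n, hn⟩ := huv ε hε
    have hpt : ∀ x, |w n x * u n x - c * (w n x * v n x)| ≤ ε * (w n x * v n x) := fun x => by
      rw [mul_left_comm, ← mul_sub, abs_mul, abs_of_nonneg (hw n x), mul_left_comm]
      exact mul_le_mul_of_nonneg_left (hn x) (hw n x)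
    calc |F - c * J| = |∫ x, (w n x * u n x - c * (w n x * v n x)) ∂ν| := by
          rw [integral_sub (hu n) ((hv n).const_mul c), integral_const_mul, hF, hJ]
      _ ≤ ∫ x, |w n x * u n x - c * (w n x * v n x)| ∂ν := abs_integral_le_integral_abs
      _ ≤ ∫ x, ε * (w n x * v n x) ∂ν :=
          integral_mono ((hu n).sub ((hv n).const_mul c)).abs ((hv n).const_mul ε) hpt
      _ = ε * J := by rw [integral_const_mul, hJ]
  have hJ_nonneg : 0 ≤ J := by simpa using (abs_nonneg _).trans (key 1 one_pos)
  refine eq_of_forall_dist_le fun ε hε => ?_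
  calc dist F (c * J) ≤ ε / (J + 1) * J := key _ (by positivity)
    _ ≤ ε := by
        rw [div_mul_eq_mul_div, div_le_iff₀ (by positivity)]
        nlinarith

end RelativeApproximation

section Shift

variable {k : ℕ}

lemma shiftT_consS (i : Fin k) (x : ShiftSpace k) : shiftT (consS i x) = x := rfl

lemma continuous_consS (i : Fin k) : Continuous (consS (k := k) i) :=
  continuous_pi fun n => by
    cases n with
    | zero => exact continuous_const
    | succ m => exact continuous_apply m

lemma continuous_shiftT : Continuous (shiftT (k := k)) :=
  continuous_pi fun n => continuous_apply (n + 1)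

variable {p H : ShiftSpace k → ℝ} {β : ℝ}

lemma lambdaN_succ (n : ℕ) (z : ShiftSpace k) :
    lambdaN p H β (n + 1) z = H z ^ (-β) * (p z)⁻¹ * lambdaN p H β n (shiftT z) := by
  simp only [lambdaN, hPow, lamInv, prod_range_succ', Function.iterate_succ_apply,
    Function.iterate_zero_apply, mul_inv]
  ring

lemma ruelleOpR_lambdaN_succ_mul (hp : ∀ x, p x ≠ 0) (n : ℕ) (f : ShiftSpace k → ℝ) :
    ruelleOpR p (fun z => lambdaN p H β (n + 1) z * f z) =
      fun x => lambdaN p H β n x * ruelleH H β f x := by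
  funext x
  simp only [ruelleOpR, ruelleH, mul_sum, lambdaN_succ, shiftT_consS]
  refine sum_congr rfl fun i _ => ?_
  field_simp [hp (consS i x)]

lemma ruelleOpR_iterate_lambdaN_mul (hp : ∀ x, p x ≠ 0) (n : ℕ) (f : ShiftSpace k → ℝ) :
    (ruelleOpR p)^[n] (fun z => lambdaN p H β n z * f z) = (ruelleH H β)^[n] f := by
  induction n generalizing f with
  | zero => funext x; simp [lambdaN, hPow, lamInv]
  | succ n ih =>
    rw [Function.iterate_succ_apply, Function.iterate_succ_apply,
      ruelleOpR_lambdaN_succ_mul hp, ih]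

lemma ruelleH_const_mul (c : ℝ) (f : ShiftSpace k → ℝ) :
    ruelleH H β (fun x => c * f x) = fun x => c * ruelleH H β f x := by
  funext x
  simp only [ruelleH, mul_sum]
  exact sum_congr rfl fun i _ => by ring

lemma ruelleH_iterate_of_eigen {h : ShiftSpace k → ℝ} {lam : ℝ}
    (heig : ∀ x, ruelleH H β h x = lam * h x) (n : ℕ) :
    (ruelleH H β)^[n] h = fun x => lam ^ n * h x := by
  induction n with
  | zero => funext x; simp
  | succ n ih =>
    rw [Function.iterate_succ_apply', ih, ruelleH_const_mul]
    funext x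
    rw [heig, pow_succ]
    ring

lemma lambdaN_pos (hp : ∀ x, 0 < p x) (hH : ∀ x, 0 < H x) (n : ℕ) (x : ShiftSpace k) :
    0 < lambdaN p H β n x :=
  mul_pos (prod_pos fun _ _ => Real.rpow_pos_of_pos (hH _) _)
    (inv_pos.2 (prod_pos fun _ _ => hp _))

lemma continuous_lambdaN (hp_cont : Continuous p) (hp : ∀ x, p x ≠ 0)
    (hH_cont : Continuous H) (hH : ∀ x, H x ≠ 0) (n : ℕ) :
    Continuous (lambdaN p H β n) := by
  refine .mul (continuous_finsetProd _ fun i _ => ?_) (.inv₀ ?_ fun x => ?_)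
  · exact (hH_cont.comp (continuous_shiftT.iterate i)).rpow_const fun x => .inl (hH _)
  · exact continuous_finsetProd _ fun i _ => hp_cont.comp (continuous_shiftT.iterate i)
  · exact prod_ne_zero_iff.2 fun _ _ => hp _

lemma continuous_ruelleH_iterate (hH_cont : Continuous H) (hH : ∀ x, H x ≠ 0)
    {f : ShiftSpace k → ℝ} (hf : Continuous f) (n : ℕ) :
    Continuous ((ruelleH H β)^[n] f) := by
  induction n with
  | zero => exact hf
  | succ n ih =>
    rw [Function.iterate_succ_apply']
    exact continuous_finsetSum _ fun i _ =>
      ((hH_cont.comp (continuous_consS i)).rpow_const fun x => .inl (hH _)).mul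
        (ih.comp (continuous_consS i))

end Shift

theorem kms_measure_unique_general {k : ℕ}
    (p : ShiftSpace k → ℝ) (hp_cont : Continuous p) (hp_pos : ∀ x, 0 < p x)
    (H : ShiftSpace k → ℝ) (hH_cont : Continuous H) (hH_pos : ∀ x, 0 < H x)
    (β lamβ : ℝ) (hlam : 0 < lamβ)
    (νβ : Measure (ShiftSpace k)) [IsProbabilityMeasure νβ]
    (hβf : ShiftSpace k → ℝ) (hβf_cont : Continuous hβf) (hβf_pos : ∀ x, 0 < hβf x)
    (hβf_eig : ∀ x, ruelleH H β hβf x = lamβ * hβf x)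
    (hRPF : ∀ f : ShiftSpace k → ℝ, Continuous f → ∀ ε > (0 : ℝ), ∃ N : ℕ,
      ∀ n ≥ N, ∀ x : ShiftSpace k,
        |(ruelleH H β)^[n] f x / lamβ ^ n - hβf x * ∫ y, f y ∂νβ| ≤ ε)
    (ν : Measure (ShiftSpace k)) [IsProbabilityMeasure ν]
    (hν : ∀ f : ShiftSpace k → ℝ, Continuous f → ∀ n : ℕ,
      ∫ x, f x ∂ν =
        ∫ x, (lambdaN p H β n x)⁻¹ *
          (ruelleOpR p)^[n] (fun z => lambdaN p H β n z * f z) (shiftT^[n] x) ∂ν) :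
    ν = νβ := by
  have hp : ∀ x, p x ≠ 0 := fun x => (hp_pos x).ne'
  have hH : ∀ x, H x ≠ 0 := fun x => (hH_pos x).ne'
  have hint : ∀ g : ShiftSpace k → ℝ, Continuous g → ∀ n,
      Integrable (fun x => (lambdaN p H β n x)⁻¹ * g (shiftT^[n] x)) ν := fun g hg n =>
    (((continuous_lambdaN hp_cont hp hH_cont hH n).inv₀ fun x =>
        (lambdaN_pos hp_pos hH_pos n x).ne').mul
      (hg.comp (continuous_shiftT.iterate n))).integrable_of_hasCompactSupport
      (.of_compactSpace _)
  have hfactor : ∀ f, Continuous f → ∫ x, f x ∂ν = (∫ x, f x ∂νβ) * ∫ x, hβf x ∂ν :=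
    fun f hf => eq_mul_of_forall_abs_sub_le_mul
      (fun n x => (inv_pos.2 (lambdaN_pos hp_pos hH_pos n x)).le)
      (fun n => hint _ (continuous_ruelleH_iterate hH_cont hH hf n) n)
      (fun n => hint (fun y => lamβ ^ n * hβf y) (by fun_prop) n)
      (fun n => by rw [hν f hf n, ruelleOpR_iterate_lambdaN_mul hp])
      (fun n => by rw [hν hβf hβf_cont n, ruelleOpR_iterate_lambdaN_mul hp,
        ruelleH_iterate_of_eigen hβf_eig])
      (fun ε hε => exists_forall_abs_sub_le_mul_of_div (pow_pos hlam) hβf_cont hβf_pos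
        (hRPF f hf) ε hε |>.imp fun n hn x => hn _)
  have hβf_int : ∫ x, hβf x ∂ν = 1 := by simpa using (hfactor 1 continuous_const).symm
  exact ext_of_forall_integral_eq_of_IsFiniteMeasure fun f => by
    rw [hfactor f f.continuous, hβf_int, mul_one]

theorem kms_measure_unique {k : ℕ} [NeZero k]
    (p : ShiftSpace k → ℝ) (hp_cont : Continuous p) (hp_pos : ∀ x, 0 < p x)
    (hp_norm : ∀ x : ShiftSpace k, ∑ i : Fin k, p (consS i x) = 1)
    (hp_hold : HolderSeq fun x => Real.log (p x))
    (μ : Measure (ShiftSpace k)) [IsProbabilityMeasure μ]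
    (hμ : ∀ f : ShiftSpace k → ℝ, Continuous f →
      ∫ x, ruelleOpR p f x ∂μ = ∫ x, f x ∂μ)
    (H : ShiftSpace k → ℝ) (hH_cont : Continuous H) (hH_pos : ∀ x, 0 < H x)
    (hH_hold : HolderSeq fun x => Real.log (H x))
    (β lamβ : ℝ) (hlam : 0 < lamβ)
    (νβ : Measure (ShiftSpace k)) [IsProbabilityMeasure νβ]
    (hνβ : ∀ f : ShiftSpace k → ℝ, Continuous f →
      ∫ x, ruelleH H β f x ∂νβ = lamβ * ∫ x, f x ∂νβ)
    (hβf : ShiftSpace k → ℝ) (hβf_cont : Continuous hβf) (hβf_pos : ∀ x, 0 < hβf x)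
    (hβf_norm : ∫ x, hβf x ∂νβ = 1)
    (hβf_eig : ∀ x, ruelleH H β hβf x = lamβ * hβf x)
    (hRPF : ∀ f : ShiftSpace k → ℝ, Continuous f → ∀ ε > (0 : ℝ), ∃ N : ℕ,
      ∀ n ≥ N, ∀ x : ShiftSpace k,
        |(ruelleH H β)^[n] f x / lamβ ^ n - hβf x * ∫ y, f y ∂νβ| ≤ ε)
    (ν : Measure (ShiftSpace k)) [IsProbabilityMeasure ν]
    (hν : ∀ f : ShiftSpace k → ℝ, Continuous f → ∀ n : ℕ,
      ∫ x, f x ∂ν =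
        ∫ x, (lambdaN p H β n x)⁻¹ *
          (ruelleOpR p)^[n] (fun z => lambdaN p H β n z * f z) (shiftT^[n] x) ∂ν) :
    ν = νβ :=
  kms_measure_unique_general p hp_cont hp_pos H hH_cont hH_pos β lamβ hlam νβ hβf hβf_cont hβf_pos
    hβf_eig hRPF ν hν
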